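/- If u is (s',M)-sparse and v is (s'',M)-sparse, then for any matrix A in C^{m×N}, |⟨u, (I − A*A)v⟩| ≤ δ_{s'+s'',M} ‖u‖₂ ‖v‖₂, where δ_{s'+s'',M} is the restricted isometry constant in levels of A of order (s'+s'', M). -/

import Mathlib

noncomputable section

open scoped BigOperators Classical

namespace SIL

/-- The index set of level `k` (0-indexed): indices `i` with `M k ≤ i < M (k+1)`. -/
def level (N : ℕ) (M : ℕ → ℕ) (k : ℕ) : Finset (Fin N) :=
  Finset.univ.filter fun i => M k ≤ (i : ℕ) ∧ (i : ℕ) < M (k + 1)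

/-- Validity of the sparsity levels `0 = M₀ < M₁ < ⋯ < M_r = N`. -/
def LevelsOK (N r : ℕ) (M : ℕ → ℕ) : Prop :=
  M 0 = 0 ∧ M r = N ∧ ∀ k < r, M k < M (k + 1)

/-- Support of a vector, as a finset. -/
def supp {N : ℕ} (x : Fin N → ℂ) : Finset (Fin N) :=
  Finset.univ.filter fun i => x i ≠ 0

/-- An `(s,M)`-sparse index set: at most `s k` indices in each level `k`. -/
def SparseSet (N r : ℕ) (M s : ℕ → ℕ) (Δ : Finset (Fin N)) : Prop :=
  ∀ k < r, (Δ ∩ level N M k).card ≤ s k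

/-- An `(s,M)`-sparse in levels vector. -/
def Sparse {N : ℕ} (r : ℕ) (M s : ℕ → ℕ) (x : Fin N → ℂ) : Prop :=
  SparseSet N r M s (supp x)

/-- Squared ℓ² norm. -/
def n2sq {ι : Type*} [Fintype ι] (x : ι → ℂ) : ℝ := ∑ i, ‖x i‖ ^ 2

/-- ℓ² norm. -/
def n2 {ι : Type*} [Fintype ι] (x : ι → ℂ) : ℝ := Real.sqrt (n2sq x)

/-- Weighted ℓ¹ norm. -/
def wn1 {ι : Type*} [Fintype ι] (w : ι → ℝ) (x : ι → ℂ) : ℝ := ∑ i, w i * ‖x i‖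

/-- Standard inner product `⟨x,y⟩ = ∑ xᵢ conj(yᵢ)`. -/
def inr {ι : Type*} [Fintype ι] (x y : ι → ℂ) : ℂ := ∑ i, x i * star (y i)

/-- Coordinate projection onto an index set. -/
def proj {N : ℕ} (Δ : Finset (Fin N)) (x : Fin N → ℂ) : Fin N → ℂ :=
  fun i => if i ∈ Δ then x i else 0

/-- The two-sided restricted isometry-in-levels inequality with constant `δ`. -/
def RIPBound {m N : ℕ} (A : Matrix (Fin m) (Fin N) ℂ) (r : ℕ) (M s : ℕ → ℕ) (δ : ℝ) : Prop :=
  ∀ x : Fin N → ℂ, Sparse r M s x →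
    (1 - δ) * n2sq x ≤ n2sq (A.mulVec x) ∧ n2sq (A.mulVec x) ≤ (1 + δ) * n2sq x

/-- The restricted isometry constant in levels `δ_{s,M}`: the smallest `δ ≥ 0`
satisfying the RIP-in-levels inequalities. -/
def ricl {m N : ℕ} (A : Matrix (Fin m) (Fin N) ℂ) (r : ℕ) (M s : ℕ → ℕ) : ℝ :=
  sInf {δ : ℝ | 0 ≤ δ ∧ RIPBound A r M s δ}

/-- Best `(s,M)`-term approximation error in the weighted ℓ¹ norm. -/
def bestApprox {N : ℕ} (r : ℕ) (M s : ℕ → ℕ) (w : Fin N → ℝ) (x : Fin N → ℂ) : ℝ :=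
  sInf {t : ℝ | ∃ z : Fin N → ℂ, Sparse r M s z ∧ t = wn1 w (x - z)}

/-- `ζ = ∑ₖ (w^{(k)})² sₖ`. -/
def zeta (r : ℕ) (s : ℕ → ℕ) (wl : ℕ → ℝ) : ℝ :=
  ∑ k ∈ Finset.range r, wl k ^ 2 * (s k : ℝ)

/-- `ξ = minₖ (w^{(k)})² sₖ`. -/
def xiMin (r : ℕ) (s : ℕ → ℕ) (wl : ℕ → ℝ) : ℝ :=
  if h : (Finset.range r).Nonempty then (Finset.range r).inf' h fun k => wl k ^ 2 * (s k : ℝ)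
  else 0

/-- `T` is a set collecting, within each level `k`, (the indices of) `s k`
largest-in-absolute-value entries of `z` (or all of the level if it is smaller). -/
def IsTopSet {N : ℕ} (r : ℕ) (M s : ℕ → ℕ) (z : Fin N → ℂ) (T : Finset (Fin N)) : Prop :=
  (∀ k < r, (T ∩ level N M k).card = min (s k) (level N M k).card) ∧
  (∀ k < r, ∀ i ∈ T ∩ level N M k, ∀ j ∈ level N M k \ T, ‖z j‖ ≤ ‖z i‖)

/-- `h` is a hard thresholding in levels `H_{s,M}(z)` of `z`. -/
def IsThresh {N : ℕ} (r : ℕ) (M s : ℕ → ℕ) (z h : Fin N → ℂ) : Prop :=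
  ∃ T : Finset (Fin N), IsTopSet r M s z T ∧ h = proj T z

/-- `X` is a sequence of IHTL iterates with data `(A, y)` and sparsities `(s, M)`. -/
def IHTLSeq {m N : ℕ} (A : Matrix (Fin m) (Fin N) ℂ) (r : ℕ) (M s : ℕ → ℕ)
    (y : Fin m → ℂ) (X : ℕ → Fin N → ℂ) : Prop :=
  ∀ n, IsThresh r M s (X n + A.conjTranspose.mulVec (y - A.mulVec (X n))) (X (n + 1))

/-- `X` is a sequence of CoSaMPL iterates with data `(A, y)` and sparsities `(s, M)`. -/
def CoSaMPLSeq {m N : ℕ} (A : Matrix (Fin m) (Fin N) ℂ) (r : ℕ) (M s : ℕ → ℕ)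
    (y : Fin m → ℂ) (X : ℕ → Fin N → ℂ) : Prop :=
  ∀ n, ∃ (T : Finset (Fin N)) (u : Fin N → ℂ),
    IsTopSet r M (fun k => 2 * s k) (A.conjTranspose.mulVec (y - A.mulVec (X n))) T ∧
    supp u ⊆ supp (X n) ∪ T ∧
    (∀ z : Fin N → ℂ, supp z ⊆ supp (X n) ∪ T → n2 (y - A.mulVec u) ≤ n2 (y - A.mulVec z)) ∧
    IsThresh r M s u (X (n + 1))


section AuxLemmas

variable {ι : Type*} [Fintype ι]

lemma n2sq_nonneg (x : ι → ℂ) : 0 ≤ n2sq x :=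
  Finset.sum_nonneg fun _ _ => sq_nonneg _

lemma sq_n2 (x : ι → ℂ) : n2 x ^ 2 = n2sq x := Real.sq_sqrt (n2sq_nonneg x)

lemma n2_nonneg (x : ι → ℂ) : 0 ≤ n2 x := Real.sqrt_nonneg _

lemma n2sq_pos_of_ne {x : ι → ℂ} (hx : x ≠ 0) : 0 < n2sq x := by
  rcases lt_or_eq_of_le (n2sq_nonneg x) with h | h
  · exact h
  · exfalso
    apply hx
    funext i
    have h0 := (Finset.sum_eq_zero_iff_of_nonneg
      (fun i (_ : i ∈ Finset.univ) => sq_nonneg ‖x i‖)).1 h.symm i (Finset.mem_univ i)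
    have : ‖x i‖ = 0 := by
      have := norm_nonneg (x i); nlinarith
    simpa using this

lemma n2_pos_of_ne {x : ι → ℂ} (hx : x ≠ 0) : 0 < n2 x :=
  Real.sqrt_pos.2 (n2sq_pos_of_ne hx)

lemma csq (z : ℂ) : ‖z‖ ^ 2 = z.re ^ 2 + z.im ^ 2 := by
  rw [Complex.sq_norm, Complex.normSq_apply]; ring

lemma polar (x y : ι → ℂ) : 4 * (inr x y).re = n2sq (x + y) - n2sq (x - y) := by
  simp only [inr, n2sq, Complex.re_sum, Pi.add_apply, Pi.sub_apply,
    ← Finset.sum_sub_distrib, Finset.mul_sum]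
  refine Finset.sum_congr rfl fun i _ => ?_
  rw [csq, csq]
  simp only [Complex.mul_re, Complex.add_re, Complex.add_im, Complex.sub_re, Complex.sub_im,
    RingHom.coe_coe, Complex.star_def, Complex.conj_re, Complex.conj_im]
  ring

lemma parallelogram (x y : ι → ℂ) :
    n2sq (x + y) + n2sq (x - y) = 2 * n2sq x + 2 * n2sq y := by
  simp only [n2sq, Pi.add_apply, Pi.sub_apply, ← Finset.sum_add_distrib, Finset.mul_sum]
  refine Finset.sum_congr rfl fun i _ => ?_
  rw [csq, csq, csq, csq]
  simp only [Complex.add_re, Complex.add_im, Complex.sub_re, Complex.sub_im]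
  ring

lemma inr_adj {m N : ℕ} (A : Matrix (Fin m) (Fin N) ℂ) (x : Fin N → ℂ) (z : Fin m → ℂ) :
    inr x (A.conjTranspose.mulVec z) = inr (A.mulVec x) z := by
  simp only [inr, Matrix.mulVec, dotProduct, Matrix.conjTranspose_apply, star_sum,
    star_mul', star_star, Finset.sum_mul, Finset.mul_sum]
  rw [Finset.sum_comm]
  exact Finset.sum_congr rfl fun i _ => Finset.sum_congr rfl fun j _ => by ring

lemma inr_sub_right (x y z : ι → ℂ) : inr x (y - z) = inr x y - inr x z := by
  simp only [inr, Pi.sub_apply, star_sub, mul_sub, Finset.sum_sub_distrib]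

lemma inr_smul_left (μ : ℂ) (x y : ι → ℂ) : inr (fun i => μ * x i) y = μ * inr x y := by
  simp only [inr, Finset.mul_sum, mul_assoc]

lemma n2sq_smul (μ : ℂ) (x : ι → ℂ) : n2sq (fun i => μ * x i) = ‖μ‖ ^ 2 * n2sq x := by
  simp only [n2sq, norm_mul, mul_pow, Finset.mul_sum]

end AuxLemmas

section SparsityAux

variable {N : ℕ}

lemma supp_subset_union_of_add_sub {x y z : Fin N → ℂ}
    (h : ∀ i, x i = 0 → y i = 0 → z i = 0) : supp z ⊆ supp x ∪ supp y := by
  intro i hi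
  simp only [supp, Finset.mem_filter, Finset.mem_univ, true_and, Finset.mem_union] at hi ⊢
  by_contra hc
  push_neg at hc
  exact hi (h i hc.1 hc.2)

lemma sparse_union {r : ℕ} {M s' s'' : ℕ → ℕ} {x y z : Fin N → ℂ}
    (hz : supp z ⊆ supp x ∪ supp y)
    (hx : Sparse r M s' x) (hy : Sparse r M s'' y) :
    Sparse r M (fun k => s' k + s'' k) z := by
  intro k hk
  have hsub : supp z ∩ level N M k ⊆ (supp x ∩ level N M k) ∪ (supp y ∩ level N M k) := by
    intro i hi
    simp only [Finset.mem_inter, Finset.mem_union] at hi ⊢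
    rcases Finset.mem_union.1 (hz hi.1) with h | h
    · exact Or.inl ⟨h, hi.2⟩
    · exact Or.inr ⟨h, hi.2⟩
  calc (supp z ∩ level N M k).card
      ≤ ((supp x ∩ level N M k) ∪ (supp y ∩ level N M k)).card := Finset.card_le_card hsub
    _ ≤ (supp x ∩ level N M k).card + (supp y ∩ level N M k).card := Finset.card_union_le _ _
    _ ≤ s' k + s'' k := Nat.add_le_add (hx k hk) (hy k hk)

lemma sparse_smul {r : ℕ} {M s : ℕ → ℕ} {x : Fin N → ℂ} (μ : ℂ)
    (hx : Sparse r M s x) : Sparse r M s (fun i => μ * x i) := by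
  intro k hk
  refine le_trans (Finset.card_le_card (Finset.inter_subset_inter ?_ (Finset.Subset.refl _)))
    (hx k hk)
  intro i hi
  simp only [supp, Finset.mem_filter, Finset.mem_univ, true_and] at hi ⊢
  intro h0
  exact hi (by rw [h0, mul_zero])

end SparsityAux

section RIPAux

variable {m N : ℕ}

lemma mulVec_n2sq_le (A : Matrix (Fin m) (Fin N) ℂ) (x : Fin N → ℂ) :
    n2sq (A.mulVec x) ≤ (∑ i, (∑ j, ‖A i j‖) ^ 2) * n2sq x := by
  have hx : ∀ j, ‖x j‖ ≤ n2 x := by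
    intro j
    refine Real.le_sqrt_of_sq_le ?_
    exact Finset.single_le_sum (f := fun i => ‖x i‖ ^ 2) (fun i _ => sq_nonneg _)
      (Finset.mem_univ j)
  have hi : ∀ i, ‖A.mulVec x i‖ ≤ (∑ j, ‖A i j‖) * n2 x := by
    intro i
    calc ‖A.mulVec x i‖ = ‖∑ j, A i j * x j‖ := rfl
      _ ≤ ∑ j, ‖A i j * x j‖ := norm_sum_le _ _
      _ = ∑ j, ‖A i j‖ * ‖x j‖ := by simp [norm_mul]
      _ ≤ ∑ j, ‖A i j‖ * n2 x :=
          Finset.sum_le_sum fun j _ => mul_le_mul_of_nonneg_left (hx j) (norm_nonneg _)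
      _ = (∑ j, ‖A i j‖) * n2 x := (Finset.sum_mul _ _ _).symm
  calc n2sq (A.mulVec x) = ∑ i, ‖A.mulVec x i‖ ^ 2 := rfl
    _ ≤ ∑ i, ((∑ j, ‖A i j‖) * n2 x) ^ 2 :=
        Finset.sum_le_sum fun i _ => pow_le_pow_left₀ (norm_nonneg _) (hi i) 2
    _ = (∑ i, (∑ j, ‖A i j‖) ^ 2) * n2sq x := by
        simp only [mul_pow]
        rw [← Finset.sum_mul, sq_n2]

lemma rip_nonempty (A : Matrix (Fin m) (Fin N) ℂ) (r : ℕ) (M s : ℕ → ℕ) :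
    ∃ δ : ℝ, 0 ≤ δ ∧ RIPBound A r M s δ := by
  set C : ℝ := ∑ i, (∑ j, ‖A i j‖) ^ 2 with hC
  have hC0 : 0 ≤ C := Finset.sum_nonneg fun _ _ => sq_nonneg _
  refine ⟨1 + C, by linarith, fun x _ => ?_⟩
  have h1 := mulVec_n2sq_le A x
  have h2 := n2sq_nonneg x
  have h3 := n2sq_nonneg (A.mulVec x)
  constructor
  · nlinarith
  · nlinarith

lemma key_bound {m N : ℕ} (r : ℕ) (M s' s'' : ℕ → ℕ)
    (A : Matrix (Fin m) (Fin N) ℂ) (u v : Fin N → ℂ)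
    (hu : Sparse r M s' u) (hv : Sparse r M s'' v) {δ : ℝ} (hδ0 : 0 ≤ δ)
    (hR : RIPBound A r M (fun k => s' k + s'' k) δ) :
    ‖inr u (v - A.conjTranspose.mulVec (A.mulVec v))‖ ≤ δ * n2 u * n2 v := by
  set w : Fin N → ℂ := v - A.conjTranspose.mulVec (A.mulVec v) with hw
  by_cases hc : inr u w = 0
  · rw [hc, norm_zero]
    have := n2_nonneg u; have := n2_nonneg v
    positivity
  · have hu0 : u ≠ 0 := by rintro rfl; exact hc (by simp [inr])
    have hv0 : v ≠ 0 := by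
      rintro rfl
      apply hc
      have : w = 0 := by simp [hw, Matrix.mulVec_zero]
      simp [this, inr]
    set c : ℂ := inr u w with hcdef
    have hnc : (0:ℝ) < ‖c‖ := norm_pos_iff.2 hc
    have hnu : 0 < n2 u := n2_pos_of_ne hu0
    have hnv : 0 < n2 v := n2_pos_of_ne hv0
    set t : ℝ := n2 v / n2 u with ht
    have htpos : 0 < t := div_pos hnv hnu
    set μ : ℂ := (t : ℂ) * (starRingEnd ℂ c / (‖c‖ : ℂ)) with hμ
    set u1 : Fin N → ℂ := fun i => μ * u i with hu1
    have hμnorm : ‖μ‖ = t := by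
      rw [hμ, norm_mul, norm_div, Complex.norm_real, Complex.norm_real,
        Real.norm_of_nonneg htpos.le, Real.norm_of_nonneg (norm_nonneg c),
        RCLike.norm_conj, div_self (ne_of_gt hnc), mul_one]
    have hμc : μ * c = ((t * ‖c‖ : ℝ) : ℂ) := by
      have hne2 : (‖c‖ : ℂ) ≠ 0 := by exact_mod_cast ne_of_gt hnc
      have h1 : (starRingEnd ℂ c) * c = ((‖c‖ : ℂ)) * ((‖c‖ : ℂ)) := by
        rw [mul_comm, Complex.mul_conj]
        norm_cast
        rw [← Complex.sq_norm]
        ring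
      calc μ * c = (t : ℂ) * (((starRingEnd ℂ c) * c) / (‖c‖ : ℂ)) := by rw [hμ]; ring
        _ = (t : ℂ) * (((‖c‖ : ℂ) * (‖c‖ : ℂ)) / (‖c‖ : ℂ)) := by rw [h1]
        _ = (t : ℂ) * (‖c‖ : ℂ) := by rw [mul_div_assoc, div_self hne2, mul_one]
        _ = ((t * ‖c‖ : ℝ) : ℂ) := by push_cast; ring
    have hre : (inr u1 w).re = t * ‖c‖ := by
      rw [hu1, inr_smul_left, ← hcdef, hμc, Complex.ofReal_re]
    -- sparsity of u1 ± v
    have hspu1 : Sparse r M s' u1 := sparse_smul μ hu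
    have hsp1 : Sparse r M (fun k => s' k + s'' k) (u1 + v) := by
      refine sparse_union ?_ hspu1 hv
      refine supp_subset_union_of_add_sub fun i h1 h2 => ?_
      simp [Pi.add_apply, h1, h2]
    have hsp2 : Sparse r M (fun k => s' k + s'' k) (u1 - v) := by
      refine sparse_union ?_ hspu1 hv
      refine supp_subset_union_of_add_sub fun i h1 h2 => ?_
      simp [Pi.sub_apply, h1, h2]
    -- the polarization computation
    have e1 : 4 * (inr u1 v).re = n2sq (u1 + v) - n2sq (u1 - v) := polar u1 v
    have e2 : 4 * (inr (A.mulVec u1) (A.mulVec v)).re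
        = n2sq (A.mulVec (u1 + v)) - n2sq (A.mulVec (u1 - v)) := by
      have h := polar (A.mulVec u1) (A.mulVec v)
      rwa [← Matrix.mulVec_add, ← Matrix.mulVec_sub] at h
    have e3 : inr u1 w = inr u1 v - inr (A.mulVec u1) (A.mulVec v) := by
      rw [hw, inr_sub_right, inr_adj]
    have hmain : 4 * (t * ‖c‖)
        = (n2sq (u1 + v) - n2sq (A.mulVec (u1 + v)))
          - (n2sq (u1 - v) - n2sq (A.mulVec (u1 - v))) := by
      have h4 : (inr u1 w).re = (inr u1 v).re - (inr (A.mulVec u1) (A.mulVec v)).re := by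
        rw [e3, Complex.sub_re]
      rw [hre] at h4
      linarith
    obtain ⟨hb1l, _⟩ := hR (u1 + v) hsp1
    obtain ⟨_, hb2r⟩ := hR (u1 - v) hsp2
    have hn2sqU1 : n2sq u1 = n2sq v := by
      rw [hu1, n2sq_smul, hμnorm, ← sq_n2 u, ← sq_n2 v, ht]
      field_simp
    have hsum : n2sq (u1 + v) + n2sq (u1 - v) = 4 * n2sq v := by
      rw [parallelogram, hn2sqU1]; ring
    have hδsum : δ * n2sq (u1 + v) + δ * n2sq (u1 - v) = 4 * (δ * n2sq v) := by
      rw [← mul_add, hsum]; ring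
    have hstep : t * ‖c‖ ≤ δ * n2sq v := by nlinarith
    have hfin : t * n2 u = n2 v := by rw [ht]; field_simp
    have hv2 : n2sq v = n2 v ^ 2 := (sq_n2 v).symm
    have h5 : ‖c‖ ≤ δ * n2sq v / t := (le_div_iff₀ htpos).2 (by linarith)
    have heq : δ * n2sq v / t = δ * n2 u * n2 v := by
      rw [hv2, ht]
      field_simp
    rw [heq] at h5
    exact h5

end RIPAux

/-- `|⟨u, (I − A*A)v⟩| ≤ δ_{s'+s'',M} ‖u‖₂ ‖v‖₂` for `u` `(s',M)`-sparse and
`v` `(s'',M)`-sparse. -/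
theorem stmt0 {m N : ℕ} (r : ℕ) (M s' s'' : ℕ → ℕ) (hM : LevelsOK N r M)
    (A : Matrix (Fin m) (Fin N) ℂ) (u v : Fin N → ℂ)
    (hu : Sparse r M s' u) (hv : Sparse r M s'' v) :
    ‖inr u (v - A.conjTranspose.mulVec (A.mulVec v))‖ ≤
      ricl A r M (fun k => s' k + s'' k) * n2 u * n2 v := by
  have hne : {δ : ℝ | 0 ≤ δ ∧ RIPBound A r M (fun k => s' k + s'' k) δ}.Nonempty := by
    obtain ⟨δ, h1, h2⟩ := rip_nonempty A r M (fun k => s' k + s'' k)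
    exact ⟨δ, h1, h2⟩
  have hnonneg : 0 ≤ ricl A r M (fun k => s' k + s'' k) :=
    le_csInf hne fun δ hδ => hδ.1
  by_cases h0 : n2 u * n2 v = 0
  · have hz : inr u (v - A.conjTranspose.mulVec (A.mulVec v)) = 0 := by
      rcases mul_eq_zero.1 h0 with h | h
      · have hu0 : u = 0 := by
          by_contra hne'
          exact absurd h (ne_of_gt (n2_pos_of_ne hne'))
        simp [hu0, inr]
      · have hv0 : v = 0 := by
          by_contra hne'
          exact absurd h (ne_of_gt (n2_pos_of_ne hne'))
        have h2 : v - A.conjTranspose.mulVec (A.mulVec v) = 0 := by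
          simp [hv0, Matrix.mulVec_zero]
        rw [h2]
        simp [inr]
    rw [hz, norm_zero]
    exact mul_nonneg (mul_nonneg hnonneg (n2_nonneg u)) (n2_nonneg v)
  · have hpos : 0 < n2 u * n2 v :=
      lt_of_le_of_ne (mul_nonneg (n2_nonneg u) (n2_nonneg v)) (Ne.symm h0)
    rw [mul_assoc, ← div_le_iff₀ hpos]
    refine le_csInf hne fun δ hδ => ?_
    rw [div_le_iff₀ hpos]
    have := key_bound r M s' s'' A u v hu hv hδ.1 hδ.2
    linarith [this]


end SIL
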